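/- Let N ≥ 2, a_j > 0, b_{j+1/2} > 0, λ > 0, and let M be the tridiagonal Dirichlet-scheme matrix with M_{11} = a_1 + λ b_{3/2} + 2λ b_{1/2}, M_{jj} = a_j + λ b_{j−1/2} + λ b_{j+1/2} (1<j<N), M_{NN} = a_N + λ b_{N−1/2} + 2λ b_{N+1/2}, M_{j,j+1} = M_{j+1,j} = −λ b_{j+1/2}. If MG = r with r_j ≥ 0 for all j and r_k > 0 for some k, and moreover all r_j > 0, then G_j > 0 for all j. -/

import Mathlib

/-!
Discrete minimum principle. Each row of the scheme reads
`r_m = c_m G_m + λ b_{m-1/2} (G_m - G_{m-1}) + λ b_{m+1/2} (G_m - G_{m+1})`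
with `c_m ≥ 0` (`c_m = a_m`, plus `2 λ b` in the boundary rows). At an index `m` where `G` is
minimal the two differences are nonpositive, so `0 < r_m ≤ c_m G_m` forces `G_m > 0`, and then
every `G_j ≥ G_m > 0`.
-/

theorem pos_of_tridiagonal_row_at_min {c p q x xl xr r : ℝ} (hc : 0 ≤ c) (hp : 0 ≤ p)
    (hq : 0 ≤ q) (hxl : x ≤ xl) (hxr : x ≤ xr)
    (hrow : -p * xl + (c + p + q) * x - q * xr = r) (hr : 0 < r) : 0 < x := by
  have hle : r ≤ c * x := by
    nlinarith [mul_nonneg hp (sub_nonneg.2 hxl), mul_nonneg hq (sub_nonneg.2 hxr)]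
  exact pos_of_mul_pos_right (hr.trans_le hle) hc

/-- Strict positivity version of the positivity-preservation theorem for the
Dirichlet scheme: if all right-hand sides are strictly positive, the solution
of the tridiagonal system is strictly positive.
Here `b j` denotes `b_{j+1/2}`, indices `j = 1, ..., N`. -/
theorem stmt_12 (N : ℕ) (hN : 2 ≤ N) (a b G r : ℕ → ℝ) (lam : ℝ)
    (ha : ∀ j, 1 ≤ j → j ≤ N → 0 < a j)
    (hb : ∀ j, j ≤ N → 0 < b j)
    (hlam : 0 < lam)
    (heq1 : (a 1 + lam * b 1 + 2 * lam * b 0) * G 1 - lam * b 1 * G 2 = r 1)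
    (heqmid : ∀ j, 1 < j → j < N →
      -(lam * b (j - 1)) * G (j - 1)
        + (a j + lam * b (j - 1) + lam * b j) * G j
        - lam * b j * G (j + 1) = r j)
    (heqN : -(lam * b (N - 1)) * G (N - 1)
        + (a N + lam * b (N - 1) + 2 * lam * b N) * G N = r N)
    (hr : ∀ j, 1 ≤ j → j ≤ N → 0 < r j) :
    ∀ j, 1 ≤ j → j ≤ N → 0 < G j := by
  obtain ⟨m, hm, hmin⟩ := Finset.exists_min_image (Finset.Icc 1 N) G
    ⟨1, Finset.mem_Icc.2 ⟨le_rfl, by omega⟩⟩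
  obtain ⟨hm1, hmN⟩ := Finset.mem_Icc.1 hm
  have hle : ∀ j, 1 ≤ j → j ≤ N → G m ≤ G j := fun j h1 h2 => hmin j (Finset.mem_Icc.2 ⟨h1, h2⟩)
  have hlamb : ∀ j, j ≤ N → 0 ≤ lam * b j := fun j hj => (mul_pos hlam (hb j hj)).le
  suffices hGm : 0 < G m from fun j h1 h2 => hGm.trans_le (hle j h1 h2)
  rcases hm1.eq_or_lt with rfl | hm1_lt
  · refine pos_of_tridiagonal_row_at_min (c := a 1 + 2 * lam * b 0) (p := 0) (xl := G 1)
      (add_nonneg (ha 1 le_rfl (by omega)).le (by linarith [hlamb 0 (by omega)]))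
      le_rfl (hlamb 1 (by omega)) le_rfl (hle 2 (by omega) hN) ?_ (hr 1 le_rfl (by omega))
    linear_combination heq1
  rcases hmN.eq_or_lt with rfl | hmN_lt
  · refine pos_of_tridiagonal_row_at_min (c := a m + 2 * lam * b m) (q := 0) (xr := G m)
      (add_nonneg (ha m (by omega) le_rfl).le (by linarith [hlamb m le_rfl]))
      (hlamb (m - 1) (by omega)) le_rfl (hle (m - 1) (by omega) (by omega)) le_rfl ?_
      (hr m (by omega) le_rfl)
    linear_combination heqN
  · exact pos_of_tridiagonal_row_at_min (ha m hm1 hmN).le (hlamb (m - 1) (by omega))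
      (hlamb m hmN) (hle (m - 1) (by omega) (by omega)) (hle (m + 1) (by omega) hmN_lt)
      (heqmid m hm1_lt hmN_lt) (hr m hm1 hmN)
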